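/- Weak blockedness property: let x₁,…,xₙ ∈ ℝ^d with n ≥ d + 1 and d ≥ 1, and let ν be a norm on ℝ^d. Then there exists (β*, α*) with β* ≠ 0 minimizing the center objective max_{i=1,…,n} |βᵀxᵢ + α| / ν(β) over all (β, α) ∈ ℝ^d × ℝ with β ≠ 0, such that the hyperplane H(β*,α*) is at maximum distance from at least d + 1 of the points: #{i : |β*ᵀxᵢ + α*| / ν(β*) = max_{k} |β*ᵀx_k + α*| / ν(β*)} ≥ d + 1. -/

import Mathlib

/-!
Rescaling `(β, α)` so that `maxᵢ |βᵀxᵢ + α| = 1` turns the center problem into maximising the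
convex function `(β, α) ↦ ν β` over the polytope `P = {(β, α) | ∀ i, |βᵀxᵢ + α| ≤ 1}`; the optimal
value is `1 / max_P ν`. If the points lie on a common hyperplane, that hyperplane has residual `0`
at all `n ≥ d + 1` points. Otherwise `(β, α) ↦ (βᵀxᵢ + α)ᵢ` is injective, so `P` is compact, and
by Krein–Milman the set of maximisers of `ν` on `P`, an extreme subset of `P`, contains an extreme
point of `P`. At an extreme point the tight constraints `|βᵀxᵢ + α| = 1` have no common nonzero
kernel direction in `ℝ^(d+1)`, so there are at least `d + 1` of them.
-/

/-- The center objective: the maximum over the `n` points (for `n ≥ 1`) of the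
norm-based residuals `|βᵀxᵢ + α| / ν(β)`. -/
noncomputable def maxRes {n d : ℕ} (hn : 0 < n) (x : Fin n → Fin d → ℝ)
    (ν : Seminorm ℝ (Fin d → ℝ)) (β : Fin d → ℝ) (α : ℝ) : ℝ :=
  Finset.univ.sup' (Finset.univ_nonempty_iff.mpr ⟨⟨0, hn⟩⟩)
    (fun i => |(∑ ℓ : Fin d, β ℓ * x i ℓ) + α| / ν β)

open Set Metric Filter Topology Module

theorem ConvexOn.isExtreme_ge_of_forall_le {𝕜 E : Type*} [Field 𝕜] [LinearOrder 𝕜]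
    [IsStrictOrderedRing 𝕜] [AddCommGroup E] [Module 𝕜 E] {s : Set E} {g : E → 𝕜}
    (hg : ConvexOn 𝕜 s g) {c : 𝕜} (hc : ∀ p ∈ s, g p ≤ c) :
    IsExtreme 𝕜 s {p ∈ s | c ≤ g p} := by
  refine ⟨sep_subset _ _, fun x₁ hx₁ x₂ hx₂ z ⟨_, hz⟩ ⟨a, b, ha, hb, hab, hxz⟩ ↦ ⟨hx₁, ?_⟩⟩
  have hconv : g z ≤ a * g x₁ + b * g x₂ := hxz ▸ hg.2 hx₁ hx₂ ha.le hb.le hab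
  have hsplit : c = a * c + b * c := by rw [← add_mul, hab, one_mul]
  refine le_of_mul_le_mul_left ?_ ha
  linarith [mul_le_mul_of_nonneg_left (hc x₂ hx₂) hb.le]

theorem IsCompact.exists_mem_extremePoints_isMaxOn {E : Type*} [NormedAddCommGroup E]
    [NormedSpace ℝ E] {s : Set E} {g : E → ℝ} (hs : IsCompact s) (hne : s.Nonempty)
    (hg : ConvexOn ℝ s g) (hgc : ContinuousOn g s) :
    ∃ e ∈ s.extremePoints ℝ, IsMaxOn g s e := by
  obtain ⟨v, hv, hmax⟩ := hs.exists_isMaxOn hne hgc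
  have hS : IsCompact {p ∈ s | g v ≤ g p} :=
    hs.of_isClosed_subset (hgc.preimage_isClosed_of_isClosed hs.isClosed isClosed_Ici)
      (sep_subset _ _)
  obtain ⟨e, he⟩ := hS.extremePoints_nonempty ⟨v, hv, le_rfl⟩
  exact ⟨e, (hg.isExtreme_ge_of_forall_le hmax).extremePoints_subset_extremePoints he,
    fun p hp ↦ (hmax hp).trans (extremePoints_subset he).2⟩

section Polytope

variable {E ι : Type*} [Fintype ι]

/-- A direction `w` on which all tight constraints vanish would keep `e ± t • w` in the polytope
for small `t`. -/
theorem finrank_le_card_abs_eq_one_of_mem_extremePoints [AddCommGroup E] [Module ℝ E]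
    [FiniteDimensional ℝ E] (L : E →ₗ[ℝ] ι → ℝ) {e : E}
    (he : e ∈ {p | ∀ i, |L p i| ≤ 1}.extremePoints ℝ) :
    finrank ℝ E ≤ (Finset.univ.filter fun i ↦ |L e i| = 1).card := by
  set A := Finset.univ.filter fun i ↦ |L e i| = 1
  by_contra! hlt
  let R : E →ₗ[ℝ] A → ℝ := LinearMap.funLeft ℝ ℝ Subtype.val ∘ₗ L
  obtain ⟨w, hwR, hw⟩ :=
    (Submodule.ne_bot_iff _).1 <| R.ker_ne_bot_of_finrank_lt (by simpa using hlt)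
  have hwA : ∀ i, |L e i| = 1 → L w i = 0 := fun i hi ↦
    congrFun hwR ⟨i, Finset.mem_filter.2 ⟨Finset.mem_univ i, hi⟩⟩
  have hev : ∀ᶠ t in 𝓝 (0 : ℝ), ∀ i, |L e i + t * L w i| ≤ 1 := by
    refine eventually_all.2 fun i ↦ ?_
    by_cases hi : |L e i| = 1
    · exact Eventually.of_forall fun t ↦ by simp [hwA i hi, hi]
    · have hcont : Tendsto (fun t : ℝ ↦ |L e i + t * L w i|) (𝓝 0) (𝓝 |L e i|) := by
        simpa using (show Continuous fun t : ℝ ↦ |L e i + t * L w i| by fun_prop).tendsto 0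
      exact (hcont.eventually (gt_mem_nhds ((he.1 i).lt_of_ne hi))).mono fun _ h ↦ h.le
  obtain ⟨t, ⟨hplus, hminus⟩, ht⟩ :=
    (((hev.and ((continuous_neg.tendsto' (0 : ℝ) 0 neg_zero).eventually hev)).filter_mono
      nhdsWithin_le_nhds).and (self_mem_nhdsWithin (s := Ioi 0))).exists
  have hmem : ∀ s : ℝ, (∀ i, |L e i + s * L w i| ≤ 1) → e + s • w ∈ {p | ∀ i, |L p i| ≤ 1} :=
    fun s hs i ↦ by simpa using hs i
  have hseg : e ∈ openSegment ℝ (e + t • w) (e + (-t) • w) :=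
    ⟨1 / 2, 1 / 2, by norm_num, by norm_num, by norm_num, by module⟩
  have hfix := he.2 (hmem t hplus) (hmem (-t) hminus) hseg
  exact ht.ne' (by simpa [hw] using hfix)

theorem LinearMap.preimage_closedBall_zero_one [AddCommGroup E] [Module ℝ E]
    (L : E →ₗ[ℝ] ι → ℝ) : L ⁻¹' closedBall 0 1 = {p | ∀ i, |L p i| ≤ 1} := by
  ext p
  simp [pi_norm_le_iff_of_nonneg]

theorem LinearMap.convex_setOf_forall_abs_apply_le_one [AddCommGroup E] [Module ℝ E]
    (L : E →ₗ[ℝ] ι → ℝ) : Convex ℝ {p | ∀ i, |L p i| ≤ 1} :=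
  L.preimage_closedBall_zero_one ▸ (convex_closedBall 0 1).linear_preimage L

theorem LinearMap.isCompact_setOf_forall_abs_apply_le_one [NormedAddCommGroup E]
    [NormedSpace ℝ E] [FiniteDimensional ℝ E] {L : E →ₗ[ℝ] ι → ℝ} (hL : Function.Injective L) :
    IsCompact {p | ∀ i, |L p i| ≤ 1} :=
  L.preimage_closedBall_zero_one ▸ (L.isClosedEmbedding_of_injective
    (LinearMap.ker_eq_bot.2 hL)).isCompact_preimage (isCompact_closedBall 0 1)

theorem exists_mem_extremePoints_isMaxOn_seminorm_fst {F : Type*} [NormedAddCommGroup E]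
    [NormedSpace ℝ E] [FiniteDimensional ℝ E] [NormedAddCommGroup F] [NormedSpace ℝ F]
    [FiniteDimensional ℝ F] (ν : Seminorm ℝ E) {L : E × F →ₗ[ℝ] ι → ℝ}
    (hL : Function.Injective L) :
    ∃ e ∈ {p | ∀ i, |L p i| ≤ 1}.extremePoints ℝ,
      IsMaxOn (fun p ↦ ν p.1) {p | ∀ i, |L p i| ≤ 1} e :=
  (LinearMap.isCompact_setOf_forall_abs_apply_le_one hL).exists_mem_extremePoints_isMaxOn
    ⟨0, by simp⟩
    ((ν.convexOn.comp_linearMap (LinearMap.fst ℝ E F)).subset (subset_univ _)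
      L.convex_setOf_forall_abs_apply_le_one)
    (ν.convexOn.locallyLipschitz.continuous.comp continuous_fst).continuousOn

end Polytope

section CenterObjective

variable {n d : ℕ}

def hyperplaneEval (x : Fin n → Fin d → ℝ) : ((Fin d → ℝ) × ℝ) →ₗ[ℝ] Fin n → ℝ where
  toFun p i := (∑ ℓ, p.1 ℓ * x i ℓ) + p.2
  map_add' p q := by
    ext i
    simp only [Prod.fst_add, Prod.snd_add, Pi.add_apply, add_mul, Finset.sum_add_distrib]
    ring
  map_smul' c p := by
    ext i
    simp [mul_add, Finset.mul_sum, mul_assoc]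

theorem hyperplaneEval_apply (x : Fin n → Fin d → ℝ) (p : (Fin d → ℝ) × ℝ) (i : Fin n) :
    hyperplaneEval x p i = (∑ ℓ, p.1 ℓ * x i ℓ) + p.2 :=
  rfl

theorem exists_fst_ne_zero_hyperplaneEval_eq_zero (hn : 0 < n) {x : Fin n → Fin d → ℝ}
    (hL : ¬Function.Injective (hyperplaneEval x)) :
    ∃ (β : Fin d → ℝ) (α : ℝ), β ≠ 0 ∧ hyperplaneEval x (β, α) = 0 := by
  obtain ⟨p, hp, hp0⟩ := (Submodule.ne_bot_iff _).1 (mt LinearMap.ker_eq_bot.1 hL)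
  refine ⟨p.1, p.2, fun h ↦ hp0 (Prod.ext h ?_), hp⟩
  simpa [h, hyperplaneEval_apply] using congrFun hp ⟨0, hn⟩

variable (hn : 0 < n) (x : Fin n → Fin d → ℝ) (ν : Seminorm ℝ (Fin d → ℝ))

theorem residual_le_maxRes (β : Fin d → ℝ) (α : ℝ) (i : Fin n) :
    |hyperplaneEval x (β, α) i| / ν β ≤ maxRes hn x ν β α :=
  Finset.le_sup' (fun i ↦ |hyperplaneEval x (β, α) i| / ν β) (Finset.mem_univ i)

theorem maxRes_le_iff {β : Fin d → ℝ} {α c : ℝ} :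
    maxRes hn x ν β α ≤ c ↔ ∀ i, |hyperplaneEval x (β, α) i| / ν β ≤ c :=
  (Finset.sup'_le_iff _ _).trans (by simp [hyperplaneEval_apply])

theorem maxRes_nonneg (β : Fin d → ℝ) (α : ℝ) : 0 ≤ maxRes hn x ν β α :=
  (div_nonneg (abs_nonneg _) (apply_nonneg ν β)).trans (residual_le_maxRes hn x ν β α ⟨0, hn⟩)

theorem maxRes_eq_zero_of_hyperplaneEval_eq_zero {β : Fin d → ℝ} {α : ℝ}
    (h : hyperplaneEval x (β, α) = 0) : maxRes hn x ν β α = 0 :=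
  le_antisymm ((maxRes_le_iff hn x ν).2 fun i ↦ by simp [h]) (maxRes_nonneg hn x ν β α)

theorem card_le_natCard_residual_eq_maxRes {β : Fin d → ℝ} {α : ℝ} {s : Finset (Fin n)}
    (hs : ∀ i ∈ s, ∀ j, |hyperplaneEval x (β, α) j| ≤ |hyperplaneEval x (β, α) i|) :
    s.card ≤ Nat.card {i : Fin n //
      |(∑ ℓ : Fin d, β ℓ * x i ℓ) + α| / ν β = maxRes hn x ν β α} := by
  classical
  rw [Nat.card_eq_fintype_card, Fintype.card_subtype]
  refine Finset.card_le_card fun i hi ↦ Finset.mem_filter.2 ⟨Finset.mem_univ i, ?_⟩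
  refine le_antisymm (residual_le_maxRes hn x ν β α i) ((maxRes_le_iff hn x ν).2 fun j ↦ ?_)
  exact div_le_div_of_nonneg_right (hs i hi j) (apply_nonneg ν β)

variable {hn x ν}

theorem maxRes_le_inv_of_forall_abs_le_one {e : (Fin d → ℝ) × ℝ}
    (he : ∀ i, |hyperplaneEval x e i| ≤ 1) : maxRes hn x ν e.1 e.2 ≤ (ν e.1)⁻¹ :=
  (maxRes_le_iff hn x ν).2 fun i ↦ by
    simpa only [one_div] using div_le_div_of_nonneg_right (he i) (apply_nonneg ν e.1)

/-- Rescaling `(β, α)` by `(maxRes · ν β)⁻¹` lands in the polytope, where `ν` is at most `ν e.1`. -/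
theorem one_le_maxRes_mul_of_isMaxOn (hν : ∀ β : Fin d → ℝ, β ≠ 0 → 0 < ν β)
    (hL : Function.Injective (hyperplaneEval x)) {e : (Fin d → ℝ) × ℝ}
    (hmax : IsMaxOn (fun p ↦ ν p.1) {p | ∀ i, |hyperplaneEval x p i| ≤ 1} e)
    {β : Fin d → ℝ} (hβ : β ≠ 0) (α : ℝ) : 1 ≤ maxRes hn x ν β α * ν e.1 := by
  have hνβ := hν β hβ
  have hbound : ∀ i, |hyperplaneEval x (β, α) i| ≤ maxRes hn x ν β α * ν β := fun i ↦
    (div_le_iff₀ hνβ).1 (residual_le_maxRes hn x ν β α i)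
  have hm : 0 < maxRes hn x ν β α := by
    refine (maxRes_nonneg hn x ν β α).lt_of_ne fun hm0 ↦ hβ ?_
    have hzero : hyperplaneEval x (β, α) = hyperplaneEval x 0 := by
      ext i
      have hi := hbound i
      rw [← hm0, zero_mul, abs_nonpos_iff] at hi
      simpa using hi
    exact congrArg Prod.fst (hL hzero)
  have hq : (maxRes hn x ν β α * ν β)⁻¹ • (β, α) ∈ {p | ∀ i, |hyperplaneEval x p i| ≤ 1} :=
    fun i ↦ by
      rw [map_smul, Pi.smul_apply, smul_eq_mul, abs_mul, abs_inv, abs_of_pos (by positivity),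
        inv_mul_le_one₀ (by positivity)]
      exact hbound i
  have hνq : ν ((maxRes hn x ν β α * ν β)⁻¹ • β) = (maxRes hn x ν β α)⁻¹ := by
    rw [map_smul_eq_mul, norm_inv, Real.norm_of_nonneg (by positivity)]
    field_simp
  exact (inv_le_iff_one_le_mul₀' hm).1 (hνq ▸ hmax hq)

end CenterObjective

/-- Weak blockedness property: for `n ≥ d + 1` points there exists an optimal center
hyperplane (minimizing the maximum of the norm-based residuals `|βᵀxᵢ + α| / ν(β)`)
that is at maximum distance from at least `d + 1` of the points. -/
theorem stmt17 {n d : ℕ} (hd : 1 ≤ d) (hn : d + 1 ≤ n)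
    (x : Fin n → Fin d → ℝ)
    (ν : Seminorm ℝ (Fin d → ℝ)) (hν : ∀ β : Fin d → ℝ, β ≠ 0 → 0 < ν β) :
    ∃ (βs : Fin d → ℝ) (αs : ℝ), βs ≠ 0 ∧
      (∀ (β : Fin d → ℝ) (α : ℝ), β ≠ 0 →
        maxRes (by omega) x ν βs αs ≤ maxRes (by omega) x ν β α) ∧
      d + 1 ≤ Nat.card {i : Fin n //
        |(∑ ℓ : Fin d, βs ℓ * x i ℓ) + αs| / ν βs = maxRes (by omega) x ν βs αs} := by
  have hn0 : 0 < n := by omega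
  by_cases hL : Function.Injective (hyperplaneEval x)
  · obtain ⟨e, he, hmax⟩ := exists_mem_extremePoints_isMaxOn_seminorm_fst ν hL
    have hopt := fun β (hβ : β ≠ 0) α ↦ one_le_maxRes_mul_of_isMaxOn (hn := hn0) hν hL hmax hβ α
    have he1 : e.1 ≠ 0 := fun h ↦ by
      have := hopt (fun _ ↦ 1) (Function.ne_iff.2 ⟨⟨0, hd⟩, one_ne_zero⟩) 0
      norm_num [h] at this
    refine ⟨e.1, e.2, he1, fun β α hβ ↦ ?_, ?_⟩
    · exact (maxRes_le_inv_of_forall_abs_le_one he.1).trans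
        ((inv_le_iff_one_le_mul₀ (hν _ he1)).2 (hopt β hβ α))
    · calc d + 1 = finrank ℝ ((Fin d → ℝ) × ℝ) := by simp
        _ ≤ _ := finrank_le_card_abs_eq_one_of_mem_extremePoints _ he
        _ ≤ _ := card_le_natCard_residual_eq_maxRes hn0 x ν fun i hi j ↦
          (Finset.mem_filter.1 hi).2 ▸ he.1 j
  · obtain ⟨β, α, hβ, hzero⟩ := exists_fst_ne_zero_hyperplaneEval_eq_zero hn0 hL
    refine ⟨β, α, hβ, fun β' α' _ ↦ ?_, ?_⟩
    · rw [maxRes_eq_zero_of_hyperplaneEval_eq_zero hn0 x ν hzero]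
      exact maxRes_nonneg hn0 x ν β' α'
    · calc d + 1 ≤ (Finset.univ : Finset (Fin n)).card := by simpa using hn
        _ ≤ _ := card_le_natCard_residual_eq_maxRes hn0 x ν fun i _ j ↦ by simp [hzero]
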